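/- Let s be a Lévy-type discrete process with s[0]=0 and independent integrable increments u[k] = s[k]−s[k−1] that are i.i.d. Fix integers 0 ≤ l, 1 ≤ n_T, and l·n_T < θ < (l+1)·n_T. Then the conditional expectation of s[θ] given the decimated samples (s[i·n_T])_{i=0}^m equals the linear interpolation (1−λ_θ) s[l·n_T] + λ_θ s[(l+1)·n_T], where λ_θ = (θ − l·n_T)/n_T. -/

import Mathlib

/-!
The law of an i.i.d. sequence is a product measure, so it is invariant under swapping two
coordinates; a swap of two increments inside the block `(l n_T, (l+1) n_T]` changes none of the
samples `s (i n_T)`. Hence all `n_T` increments of the block have the same integral `c` over every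
event generated by the samples. Over such an event `s θ` and `s ((l+1) n_T)` therefore integrate
to that of `s (l n_T)` plus `(θ - l n_T) c` and `n_T c` respectively, which is the linear
interpolation.
-/

open MeasureTheory ProbabilityTheory Finset

section

variable {Ω : Type*} [MeasurableSpace Ω] {μ : Measure Ω}

theorem ProbabilityTheory.iIndepFun.map_perm_eq {ι 𝓧 : Type*} [MeasurableSpace 𝓧]
    {X : ι → Ω → 𝓧} (hindep : iIndepFun X μ) (hmeas : ∀ i, Measurable (X i))
    (hident : ∀ i j, μ.map (X i) = μ.map (X j)) (σ : Equiv.Perm ι) :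
    μ.map (fun ω i => X (σ i) ω) = μ.map (fun ω i => X i ω) := by
  rw [(hindep.precomp σ.injective).map_fun_eq_infinitePi_map (fun i => hmeas (σ i)),
    hindep.map_fun_eq_infinitePi_map hmeas]
  congr 1
  exact funext fun i => hident _ _

theorem ProbabilityTheory.iIndepFun.map_prod_sum_eq_of_swap {ι M κ : Type*} [DecidableEq ι]
    [AddCommMonoid M] [MeasurableSpace M] [MeasurableAdd₂ M]
    {X : ι → Ω → M} (hindep : iIndepFun X μ) (hmeas : ∀ i, Measurable (X i))
    (hident : ∀ i j, μ.map (X i) = μ.map (X j)) (S : κ → Finset ι) {j j' : ι}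
    (hS : ∀ k, j ∈ S k ↔ j' ∈ S k) :
    μ.map (fun ω => (X j ω, fun k => ∑ i ∈ S k, X i ω)) =
      μ.map (fun ω => (X j' ω, fun k => ∑ i ∈ S k, X i ω)) := by
  set σ := Equiv.swap j j'
  let F : (ι → M) → M × (κ → M) := fun x => (x j, fun k => ∑ i ∈ S k, x i)
  have hF : Measurable F := (measurable_pi_apply j).prodMk <|
    measurable_pi_lambda _ fun k => Finset.measurable_sum _ fun i _ => measurable_pi_apply i
  have hσS : ∀ k i, i ∈ S k ↔ σ i ∈ S k := by
    intro k i
    rcases eq_or_ne i j with rfl | hij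
    · simpa [σ] using hS k
    rcases eq_or_ne i j' with rfl | hij'
    · simpa [σ] using (hS k).symm
    · rw [Equiv.swap_apply_of_ne_of_ne hij hij']
  have hFσ : ∀ x : ι → M, F (fun i => x (σ i)) = (x j', fun k => ∑ i ∈ S k, x i) := by
    intro x
    refine Prod.ext (by simp [F, σ]) (funext fun k => ?_)
    exact Finset.sum_equiv σ (hσS k) fun _ _ => rfl
  calc μ.map (fun ω => (X j ω, fun k => ∑ i ∈ S k, X i ω))
      = (μ.map fun ω i => X i ω).map F := (Measure.map_map hF (measurable_pi_lambda _ hmeas)).symm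
    _ = (μ.map fun ω i => X (σ i) ω).map F := by rw [hindep.map_perm_eq hmeas hident]
    _ = μ.map (fun ω => (X j' ω, fun k => ∑ i ∈ S k, X i ω)) := by
      rw [Measure.map_map hF (measurable_pi_lambda _ fun i => hmeas (σ i))]
      exact congrArg (Measure.map · μ) (funext fun ω => hFσ fun i => X i ω)

theorem setIntegral_preimage_eq_of_map_prod_eq {β : Type*} [MeasurableSpace β]
    {X X' : Ω → ℝ} {Y : Ω → β} (hX : Measurable X) (hX' : Measurable X') (hY : Measurable Y)
    (h : μ.map (fun ω => (X ω, Y ω)) = μ.map (fun ω => (X' ω, Y ω)))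
    {B : Set β} (hB : MeasurableSet B) :
    ∫ ω in Y ⁻¹' B, X ω ∂μ = ∫ ω in Y ⁻¹' B, X' ω ∂μ := by
  have hpush : ∀ Z : Ω → ℝ, Measurable Z →
      ∫ ω in Y ⁻¹' B, Z ω ∂μ = ∫ p in Set.univ ×ˢ B, p.1 ∂(μ.map fun ω => (Z ω, Y ω)) := by
    intro Z hZ
    rw [setIntegral_map (MeasurableSet.univ.prod hB) measurable_fst.aestronglyMeasurable
      (hZ.prodMk hY).aemeasurable, Set.univ_prod, Set.preimage_preimage]
  rw [hpush X hX, hpush X' hX', h]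

theorem setIntegral_sum_eq_card_mul {ι : Type*}
    {X : ι → Ω → ℝ} (hint : ∀ i, Integrable (X i) μ) {E : Set Ω} {S : Finset ι} {c : ℝ}
    (hc : ∀ i ∈ S, ∫ ω in E, X i ω ∂μ = c) :
    ∫ ω in E, ∑ i ∈ S, X i ω ∂μ = #S * c := by
  rw [integral_finsetSum _ fun i _ => (hint i).integrableOn, sum_congr rfl hc, sum_const,
    nsmul_eq_mul]

theorem setIntegral_sum_Icc_eq_add_mul
    {X : ℕ → Ω → ℝ} (hint : ∀ i, Integrable (X i) μ) {E : Set Ω} {a d : ℕ} {c : ℝ}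
    (had : a ≤ d) (hc : ∀ i ∈ Ioc a d, ∫ ω in E, X i ω ∂μ = c) :
    ∫ ω in E, ∑ i ∈ Icc 1 d, X i ω ∂μ = ∫ ω in E, ∑ i ∈ Icc 1 a, X i ω ∂μ + (d - a) * c := by
  have hsplit : ∀ ω, ∑ i ∈ Icc 1 d, X i ω = ∑ i ∈ Icc 1 a, X i ω + ∑ i ∈ Ioc a d, X i ω := by
    intro ω
    have hIcc : ∀ k, Icc 1 k = Ioc 0 k := Icc_add_one_left_eq_Ioc 0
    rw [hIcc, hIcc, sum_Ioc_consecutive _ (Nat.zero_le a) had]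
  simp only [hsplit]
  rw [integral_add (integrable_finsetSum _ fun i _ => (hint i).integrableOn)
    (integrable_finsetSum _ fun i _ => (hint i).integrableOn), setIntegral_sum_eq_card_mul hint hc,
    Nat.card_Ioc, Nat.cast_sub had]

theorem setIntegral_interpolate_sum_Icc
    {X : ℕ → Ω → ℝ} (hint : ∀ i, Integrable (X i) μ) {E : Set Ω} {a b θ : ℕ} {c lam : ℝ}
    (haθ : a ≤ θ) (hθb : θ ≤ b) (hc : ∀ i ∈ Ioc a b, ∫ ω in E, X i ω ∂μ = c)
    (hlam : lam * ((b : ℝ) - a) = θ - a) :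
    ∫ ω in E, ((1 - lam) * ∑ i ∈ Icc 1 a, X i ω + lam * ∑ i ∈ Icc 1 b, X i ω) ∂μ =
      ∫ ω in E, ∑ i ∈ Icc 1 θ, X i ω ∂μ := by
  have hsint : ∀ d, IntegrableOn (fun ω => ∑ i ∈ Icc 1 d, X i ω) E μ :=
    fun d => (integrable_finsetSum _ fun i _ => hint i).integrableOn
  have hcθ : ∀ i ∈ Ioc a θ, ∫ ω in E, X i ω ∂μ = c :=
    fun i hi => hc i (Ioc_subset_Ioc_right hθb hi)
  rw [integral_add ((hsint a).const_mul _) ((hsint b).const_mul _), integral_const_mul,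
    integral_const_mul, setIntegral_sum_Icc_eq_add_mul hint (haθ.trans hθb) hc,
    setIntegral_sum_Icc_eq_add_mul hint haθ hcθ]
  linear_combination c * hlam

theorem ProbabilityTheory.iIndepFun.setIntegral_preimage_partialSums_eq {κ : Type*}
    {X : ℕ → Ω → ℝ} (hindep : iIndepFun X μ) (hmeas : ∀ i, Measurable (X i))
    (hident : ∀ i j, μ.map (X i) = μ.map (X j)) {t : κ → ℕ} {j j' : ℕ}
    (ht : ∀ k, j ≤ t k ↔ j' ≤ t k) (hj : 1 ≤ j) (hj' : 1 ≤ j')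
    {B : Set (κ → ℝ)} (hB : MeasurableSet B) :
    ∫ ω in (fun ω k => ∑ i ∈ Icc 1 (t k), X i ω) ⁻¹' B, X j ω ∂μ =
      ∫ ω in (fun ω k => ∑ i ∈ Icc 1 (t k), X i ω) ⁻¹' B, X j' ω ∂μ :=
  setIntegral_preimage_eq_of_map_prod_eq (hmeas j) (hmeas j')
    (measurable_pi_lambda _ fun k => Finset.measurable_sum _ fun i _ => hmeas i)
    (hindep.map_prod_sum_eq_of_swap hmeas hident _ fun k => by simp [mem_Icc, hj, hj', ht k]) hB

end

theorem le_mul_iff_of_mem_Ioc_mul {n l i j j' : ℕ} (hj : j ∈ Ioc (l * n) ((l + 1) * n))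
    (hj' : j' ∈ Ioc (l * n) ((l + 1) * n)) : j ≤ i * n ↔ j' ≤ i * n := by
  rw [mem_Ioc] at hj hj'
  rcases le_or_gt i l with h | h
  · have := Nat.mul_le_mul_right n h
    omega
  · have : (l + 1) * n ≤ i * n := Nat.mul_le_mul_right n h
    omega

/-- MMSE interpolation of a Lévy-type discrete process: with `s[0] = 0` and i.i.d.
integrable increments `u[k] = s[k] − s[k−1]`, for `l·n_T < θ < (l+1)·n_T` the conditional
expectation of `s[θ]` given the decimated samples `(s[i·n_T])_{i=0}^m` is the linear
interpolation `(1−λ_θ) s[l·n_T] + λ_θ s[(l+1)·n_T]` with `λ_θ = (θ − l·n_T)/n_T`. -/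
theorem levy_mmse_interpolation_linear
    {Ω : Type*} [m0 : MeasurableSpace Ω] (μ : Measure Ω) [IsProbabilityMeasure μ]
    (u : ℕ → Ω → ℝ)
    (hmeas : ∀ k, Measurable (u k))
    (hindep : iIndepFun u μ)
    (hident : ∀ j k, Measure.map (u j) μ = Measure.map (u k) μ)
    (hint : ∀ k, Integrable (u k) μ)
    (s : ℕ → Ω → ℝ) (hs : ∀ k ω, s k ω = ∑ j ∈ Finset.Icc 1 k, u j ω)
    (m l n_T θ : ℕ) (hnT : 1 ≤ n_T)
    (hθ₁ : l * n_T < θ) (hθ₂ : θ < (l + 1) * n_T) (hm : l + 1 ≤ m) :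
    μ[s θ | MeasurableSpace.comap (fun ω => fun i : Fin (m + 1) => s (i * n_T) ω)
        inferInstance] =ᵐ[μ]
      fun ω =>
        (1 - ((θ : ℝ) - l * n_T) / n_T) * s (l * n_T) ω +
          (((θ : ℝ) - l * n_T) / n_T) * s ((l + 1) * n_T) ω := by
  obtain rfl : s = fun k ω => ∑ j ∈ Icc 1 k, u j ω := funext fun k => funext (hs k)
  set Y : Ω → Fin (m + 1) → ℝ := fun ω i => ∑ j ∈ Icc 1 (i * n_T), u j ω
  set lam : ℝ := ((θ : ℝ) - l * n_T) / n_T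
  have hsint : ∀ k, Integrable (fun ω => ∑ j ∈ Icc 1 k, u j ω) μ :=
    fun k => integrable_finsetSum _ fun j _ => hint j
  have hYm : Measurable Y :=
    measurable_pi_lambda _ fun i => Finset.measurable_sum _ fun j _ => hmeas j
  refine (ae_eq_condExp_of_forall_setIntegral_eq hYm.comap_le (hsint θ)
    (fun _ _ _ => (((hsint _).const_mul _).add ((hsint _).const_mul _)).integrableOn) ?_ ?_).symm
  · rintro _ ⟨B, hB, rfl⟩ -
    have hfirst : l * n_T + 1 ∈ Ioc (l * n_T) ((l + 1) * n_T) :=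
      mem_Ioc.2 ⟨lt_add_one _, hθ₁.trans hθ₂⟩
    refine setIntegral_interpolate_sum_Icc hint hθ₁.le hθ₂.le (fun j hj =>
      hindep.setIntegral_preimage_partialSums_eq hmeas hident
        (fun i => le_mul_iff_of_mem_Ioc_mul hj hfirst) (mem_Ioc.1 hj).1.pos le_add_self hB) ?_
    rw [div_mul_eq_mul_div, div_eq_iff (Nat.cast_ne_zero.2 (by lia))]
    push_cast
    ring
  · have hG : Measurable fun y : Fin (m + 1) → ℝ =>
        (1 - lam) * y ⟨l, by lia⟩ + lam * y ⟨l + 1, by lia⟩ := by fun_prop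
    exact (hG.comp (comap_measurable Y)).stronglyMeasurable.aestronglyMeasurable
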